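/- If Y is a k-reducing fixed point combinator, then for every n ≥ 0 the term Y (SS) S^n I is a (k+3n+7)-reducing fixed point combinator: Y (SS) S^n I x reduces to x (Y (SS) S^n I x) in exactly k+3n+7 β-steps. -/
import Mathlib


/-- Untyped λ-terms in de Bruijn notation. -/
inductive Lam : Type
  | var : Nat → Lam
  | app : Lam → Lam → Lam
  | lam : Lam → Lam
  deriving DecidableEq

namespace Lam

/-- Lift (shift) free variables ≥ `d` by one. -/
def lift (d : Nat) : Lam → Lam
  | var n => if n < d then var n else var (n + 1)
  | app s t => app (lift d s) (lift d t)
  | lam t => lam (lift (d + 1) t)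

/-- Capture-avoiding substitution of `u` for the variable with index `k`. -/
def subst (k : Nat) (u : Lam) : Lam → Lam
  | var n => if n = k then u else if k < n then var (n - 1) else var n
  | app s t => app (subst k u s) (subst k u t)
  | lam t => lam (subst (k + 1) (lift 0 u) t)

/-- One-step β-reduction `→β` (compatible closure of the β-rule). -/
inductive Step : Lam → Lam → Prop
  | beta (t u : Lam) : Step (app (lam t) u) (subst 0 u t)
  | appL {s s' : Lam} (t : Lam) : Step s s' → Step (app s t) (app s' t)
  | appR (s : Lam) {t t' : Lam} : Step t t' → Step (app s t) (app s t')
  | lam {t t' : Lam} : Step t t' → Step (lam t) (lam t')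

/-- Many-step β-reduction `↠β`. -/
def Red : Lam → Lam → Prop := Relation.ReflTransGen Step

/-- β-convertibility `=β`. -/
def Conv : Lam → Lam → Prop := Relation.EqvGen Step

/-- `Y` is a fixed point combinator: `Y x =β x (Y x)` for a fresh variable `x`. -/
def isFPC (Y : Lam) : Prop :=
  Conv (app (lift 0 Y) (var 0)) (app (var 0) (app (lift 0 Y) (var 0)))

/-- `M P^n`: `M` applied to `n` copies of `P`. -/
def appIter (M P : Lam) : Nat → Lam
  | 0 => M
  | n + 1 => appIter (app M P) P n

/-- `I = λx.x` -/
def K_I : Lam := lam (var 0)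

/-- `S = λxyz.xz(yz)` -/
def K_S : Lam := lam (lam (lam (app (app (var 2) (var 0)) (app (var 1) (var 0)))))

/-- `B = λxyz.x(yz)` -/
def K_B : Lam := lam (lam (lam (app (var 2) (app (var 1) (var 0)))))

/-- `δ = λab.b(ab)` -/
def K_delta : Lam := lam (lam (app (var 0) (app (var 1) (var 0))))

/-- `ω_f = λx.f(xx)` (with `f` the variable bound just outside). -/
def K_omega : Lam := lam (app (var 1) (app (var 0) (var 0)))

/-- Curry's fpc `Y0 = λf.ω_f ω_f`. -/
def Y0 : Lam := lam (app K_omega K_omega)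

/-- `η = λxf.f(xxf)` -/
def K_eta : Lam := lam (lam (app (var 0) (app (app (var 1) (var 1)) (var 0))))

/-- Turing's fpc `Y1 = ηη`. -/
def Y1 : Lam := app K_eta K_eta

/-- One head reduction step: contraction of the head redex. -/
inductive Head : Lam → Lam → Prop
  | beta (t u : Lam) : Head (app (lam t) u) (subst 0 u t)
  | app {s s' : Lam} (t : Lam) : (∀ u, s ≠ lam u) → Head s s' → Head (app s t) (app s' t)
  | lam {t t' : Lam} : Head t t' → Head (lam t) (lam t')

/-- Exactly `k` head reduction steps. -/
def HeadN : Nat → Lam → Lam → Prop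
  | 0, s, t => s = t
  | k + 1, s, t => ∃ u, Head s u ∧ HeadN k u t

/-- Exactly `k` β-reduction steps. -/
def StepN : Nat → Lam → Lam → Prop
  | 0, s, t => s = t
  | k + 1, s, t => ∃ u, Step s u ∧ StepN k u t

/-- `Y` is a `k`-reducing fpc: `Y x` reduces to `x (Y x)` in exactly `k` β-steps
(for `x` a fresh variable). -/
def isRedFPC (k : Nat) (Y : Lam) : Prop :=
  StepN k (app (lift 0 Y) (var 0)) (app (var 0) (app (lift 0 Y) (var 0)))

theorem lift_lift (t : Lam) : ∀ d d', d ≤ d' → lift d (lift d' t) = lift (d' + 1) (lift d t) := by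
  induction t with
  | var n =>
    intro d d' h
    simp only [lift]
    split_ifs <;> simp only [lift] <;> split_ifs <;>
      first | rfl | omega | (congr 1; omega)
  | app s t ihs iht => intro d d' h; simp only [lift, ihs _ _ h, iht _ _ h]
  | lam t ih => intro d d' h; simp only [lift]; rw [ih (d + 1) (d' + 1) (by omega)]

theorem subst_lift (t : Lam) : ∀ k u, subst k u (lift k t) = t := by
  induction t with
  | var n =>
    intro k u
    simp only [lift]
    split_ifs <;> simp only [subst] <;> split_ifs <;>
      first | rfl | omega | (congr 1; omega)
  | app s t ihs iht => intro k u; simp only [lift, subst, ihs, iht]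
  | lam t ih => intro k u; simp only [lift, subst, ih]

theorem lift_subst_le (t : Lam) : ∀ u k d, k ≤ d →
    lift d (subst k u t) = subst k (lift d u) (lift (d + 1) t) := by
  induction t with
  | var n =>
    intro u k d h
    simp only [subst]
    split_ifs <;> simp only [lift] <;> split_ifs <;> simp only [subst] <;> split_ifs <;>
      first | rfl | omega | (congr 1; omega)
  | app s t ihs iht => intro u k d h; simp only [lift, subst, ihs _ _ _ h, iht _ _ _ h]
  | lam t ih =>
    intro u k d h
    simp only [lift, subst, ih _ _ _ (by omega : k + 1 ≤ d + 1)]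
    rw [lift_lift u 0 d (by omega)]

theorem lift_subst_ge (t : Lam) : ∀ u k d, d ≤ k →
    lift d (subst k u t) = subst (k + 1) (lift d u) (lift d t) := by
  induction t with
  | var n =>
    intro u k d h
    simp only [subst]
    split_ifs <;> simp only [lift] <;> split_ifs <;> simp only [subst] <;> split_ifs <;>
      first | rfl | omega | (congr 1; omega)
  | app s t ihs iht => intro u k d h; simp only [lift, subst, ihs _ _ _ h, iht _ _ _ h]
  | lam t ih =>
    intro u k d h
    simp only [lift, subst, ih _ _ _ (by omega : d + 1 ≤ k + 1)]
    rw [lift_lift u 0 d (by omega)]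

theorem subst_subst (t : Lam) : ∀ u v j k, j ≤ k →
    subst k u (subst j v t) = subst j (subst k u v) (subst (k + 1) (lift j u) t) := by
  induction t with
  | var n =>
    intro u v j k h
    simp only [subst]
    split_ifs <;> (try simp only [subst]) <;> (try split_ifs) <;> first | rfl | omega | (congr 1; omega) | exact (subst_lift _ _ _) | exact (subst_lift _ _ _).symm
  | app s t ihs iht => intro u v j k h; simp only [subst, ihs _ _ _ _ h, iht _ _ _ _ h]
  | lam t ih =>
    intro u v j k h
    simp only [subst, ih _ _ _ _ (by omega : j + 1 ≤ k + 1)]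
    rw [← lift_subst_ge v u k 0 (by omega), lift_lift u 0 j (by omega)]
theorem step_beta' {t u s : Lam} (h : subst 0 u t = s) : Step (app (lam t) u) s :=
  h ▸ Step.beta t u

theorem step_lift {s t : Lam} (h : Step s t) : ∀ d, Step (lift d s) (lift d t) := by
  induction h with
  | beta t u =>
    intro d
    rw [lift_subst_le t u 0 d (by omega)]
    exact Step.beta _ _
  | appL t _ ih => intro d; exact Step.appL _ (ih d)
  | appR s _ ih => intro d; exact Step.appR _ (ih d)
  | lam _ ih => intro d; exact Step.lam (ih (d + 1))

theorem step_subst {s t : Lam} (h : Step s t) : ∀ k u, Step (subst k u s) (subst k u t) := by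
  induction h with
  | beta t u =>
    intro k w
    exact step_beta' (subst_subst t w u 0 k (by omega)).symm
  | appL t _ ih => intro k w; exact Step.appL _ (ih k w)
  | appR s _ ih => intro k w; exact Step.appR _ (ih k w)
  | lam _ ih => intro k w; exact Step.lam (ih (k + 1) (lift 0 w))

theorem stepN_cast {m m' : Nat} {s t : Lam} (h : m = m') (hs : StepN m s t) : StepN m' s t :=
  h ▸ hs

theorem stepN_trans : ∀ (a : Nat) {b : Nat} {s t u : Lam},
    StepN a s t → StepN b t u → StepN (a + b) s u := by
  intro a
  induction a with
  | zero => intro b s t u h1 h2; cases h1; simpa using h2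
  | succ a ih =>
    intro b s t u h1 h2
    obtain ⟨w, hw, h1'⟩ := h1
    have h3 : StepN (a + b + 1) s u := ⟨w, hw, ih h1' h2⟩
    exact stepN_cast (by omega) h3

theorem stepN_appL : ∀ (m : Nat) {s s' : Lam} (t : Lam),
    StepN m s s' → StepN m (app s t) (app s' t) := by
  intro m
  induction m with
  | zero => intro s s' t h; cases h; rfl
  | succ m ih =>
    intro s s' t h
    obtain ⟨w, hw, h'⟩ := h
    exact ⟨app w t, Step.appL t hw, ih t h'⟩

theorem stepN_lift : ∀ (m : Nat) {s s' : Lam} (d : Nat),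
    StepN m s s' → StepN m (lift d s) (lift d s') := by
  intro m
  induction m with
  | zero => intro s s' d h; cases h; rfl
  | succ m ih =>
    intro s s' d h
    obtain ⟨w, hw, h'⟩ := h
    exact ⟨lift d w, step_lift hw d, ih d h'⟩

theorem stepN_subst : ∀ (m : Nat) {s s' : Lam} (k : Nat) (u : Lam),
    StepN m s s' → StepN m (subst k u s) (subst k u s') := by
  intro m
  induction m with
  | zero => intro s s' k u h; cases h; rfl
  | succ m ih =>
    intro s s' k u h
    obtain ⟨w, hw, h'⟩ := h
    exact ⟨subst k u w, step_subst hw k u, ih k u h'⟩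

theorem stepN_appIter : ∀ (n : Nat) {m : Nat} {s s' : Lam} (P : Lam),
    StepN m s s' → StepN m (appIter s P n) (appIter s' P n) := by
  intro n
  induction n with
  | zero => intro m s s' P h; exact h
  | succ n ih => intro m s s' P h; exact ih P (stepN_appL m P h)

theorem lift_K_S (d : Nat) : lift d K_S = K_S := by
  simp only [K_S, lift]
  norm_num

theorem lift_K_I (d : Nat) : lift d K_I = K_I := by
  simp only [K_I, lift]
  norm_num

theorem lift_appIter (n : Nat) : ∀ (M P : Lam) (d : Nat),
    lift d (appIter M P n) = appIter (lift d M) (lift d P) n := by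
  induction n with
  | zero => intro M P d; rfl
  | succ n ih => intro M P d; simp only [appIter, ih, lift]

theorem Sstep (A B C : Lam) :
    StepN 3 (app (app (app K_S A) B) C) (app (app A C) (app B C)) := by
  refine ⟨app (app (lam (lam (app (app (lift 0 (lift 0 A)) (var 0)) (app (var 1) (var 0))))) B) C,
    Step.appL _ (Step.appL _ (step_beta' ?_)),
    app (lam (app (app (lift 0 A) (var 0)) (app (lift 0 B) (var 0)))) C,
    Step.appL _ (step_beta' ?_),
    app (app A C) (app B C), step_beta' ?_, rfl⟩
  · simp only [K_S, subst]
    norm_num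
  · simp only [subst]
    rw [lift_lift A 0 0 (by omega)]
    simp only [subst_lift]
    norm_num
  · simp only [subst, subst_lift]
    norm_num
theorem main_red (n : Nat) : ∀ A : Lam,
    StepN (3 * n + 7)
      (app (app (appIter (app (app K_S K_S) A) K_S n) K_I) (var 0))
      (app (var 0) (app (app (appIter A K_S n) K_I) (var 0))) := by
  induction n with
  | zero =>
    intro A
    have h1 : StepN 3 (app (app (app (app K_S K_S) A) K_I) (var 0))
        (app (app (app K_S K_I) (app A K_I)) (var 0)) :=
      stepN_appL 3 (var 0) (Sstep K_S A K_I)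
    have h2 := Sstep K_I (app A K_I) (var 0)
    have h3 : StepN 1 (app (app K_I (var 0)) (app (app A K_I) (var 0)))
        (app (var 0) (app (app A K_I) (var 0))) :=
      ⟨_, Step.appL _ (step_beta' rfl), rfl⟩
    exact stepN_cast (by omega) (stepN_trans 3 h1 (stepN_trans 3 h2 h3))
  | succ n ih =>
    intro A
    have h1 : StepN 3
        (app (app (appIter (app (app (app K_S K_S) A) K_S) K_S n) K_I) (var 0))
        (app (app (appIter (app (app K_S K_S) (app A K_S)) K_S n) K_I) (var 0)) :=
      stepN_appL 3 (var 0) (stepN_appL 3 K_I (stepN_appIter n K_S (Sstep K_S A K_S)))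
    exact stepN_cast (by omega) (stepN_trans 3 h1 (ih (app A K_S)))

/-- If `Y` is a `k`-reducing fpc, then `Y (SS) S^n I` is a `(k+3n+7)`-reducing fpc. -/
theorem YSSSnI_reducing :
    ∀ (Y : Lam) (k : Nat), isRedFPC k Y →
      ∀ n : Nat, isRedFPC (k + 3 * n + 7) (app (appIter (app Y (app K_S K_S)) K_S n) K_I) := by
  intro Y k h n
  unfold isRedFPC at h ⊢
  have h1 := stepN_lift k 1 h
  simp only [lift] at h1
  norm_num at h1
  rw [← lift_lift Y 0 0 (by omega)] at h1
  have h2 := stepN_subst k 0 (app K_S K_S) h1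
  simp only [subst, subst_lift] at h2
  norm_num at h2
  simp only [lift, lift_appIter, lift_K_S, lift_K_I]
  exact stepN_cast (by omega)
    (stepN_trans k
      (stepN_appL k (var 0) (stepN_appL k K_I (stepN_appIter n K_S h2)))
      (main_red n (app (lift 0 Y) (app K_S K_S))))
end Lam
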